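/- Let X be a Banach space such that every element of X** is the weak* limit of a sequence from (the canonical image of) X. Then for every closed separable subspace Z₀ of X**, there exists a closed separable subspace Z of X such that Z₀ is contained in the double annihilator Z^{⊥⊥} ⊆ X**. -/

import Mathlib

open NormedSpace Filter Topology

noncomputable section

/-- The annihilator of a subspace `Y ⊆ X` inside the continuous dual of `X`. -/
def annih {X : Type*} [SeminormedAddCommGroup X] [NormedSpace ℝ X] (Y : Submodule ℝ X) :
    Submodule ℝ (StrongDual ℝ X) where
  carrier := {f | ∀ y ∈ Y, f y = 0}
  add_mem' := by
    intro a b ha hb y hy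
    simp [ContinuousLinearMap.add_apply, ha y hy, hb y hy]
  zero_mem' := by intro y hy; rfl
  smul_mem' := by
    intro c f hf y hy
    simp [hf y hy]

/-- A Banach space is reflexive iff the canonical embedding into its bidual is surjective. -/
def BReflexive (X : Type*) [SeminormedAddCommGroup X] [NormedSpace ℝ X] : Prop :=
  Function.Surjective (inclusionInDoubleDual ℝ X)

/-- A Banach space is coreflexive iff `X**/J_X(X)` is reflexive. -/
def Coreflexive (X : Type*) [SeminormedAddCommGroup X] [NormedSpace ℝ X] : Prop :=
  @BReflexive (@HasQuotient.Quotient _ _ (Submodule.hasQuotient (M := StrongDual ℝ (StrongDual ℝ X))) (LinearMap.range (inclusionInDoubleDual ℝ X).toLinearMap))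
    (Submodule.Quotient.seminormedAddCommGroup (M := StrongDual ℝ (StrongDual ℝ X)) _)
    (Submodule.Quotient.normedSpace (M := StrongDual ℝ (StrongDual ℝ X)) _ ℝ)

/-- The adjoint of a continuous linear map between normed spaces. -/
def adj {E F : Type*} [SeminormedAddCommGroup E] [NormedSpace ℝ E]
    [SeminormedAddCommGroup F] [NormedSpace ℝ F] (f : E →L[ℝ] F) :
    StrongDual ℝ F →L[ℝ] StrongDual ℝ E :=
  (ContinuousLinearMap.compL ℝ E F ℝ).flip f

/-- `X` is weak*-sequentially dense in its bidual. -/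
def WStarSeqDense (X : Type*) [SeminormedAddCommGroup X] [NormedSpace ℝ X] : Prop :=
  ∀ F : StrongDual ℝ (StrongDual ℝ X), ∃ x : ℕ → X, ∀ f : StrongDual ℝ X,
    Tendsto (fun n => inclusionInDoubleDual ℝ X (x n) f) atTop (𝓝 (F f))

/-- `x` is a point of weak-to-norm continuity of the closed unit ball of `X`. -/
def wPC (X : Type*) [SeminormedAddCommGroup X] [NormedSpace ℝ X] (x : X) : Prop :=
  ∀ l : Filter X, (∀ᶠ y in l, ‖y‖ ≤ 1) →
    (∀ f : StrongDual ℝ X, Tendsto (fun y => f y) l (𝓝 (f x))) →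
    Tendsto id l (𝓝 x)

/-! A countable dense subset of `Z₀` is approximated weak* by countably many sequences of `X`;
the closed span `Z` of all their terms is separable, and `Z^⊥⊥` contains every weak* limit of
points of `Z` and is norm closed, so it contains the closure of that dense subset, i.e. `Z₀`. -/

section Annihilator

variable {X : Type*} [SeminormedAddCommGroup X] [NormedSpace ℝ X]

theorem isClosed_annih (Y : Submodule ℝ X) : IsClosed (annih Y : Set (StrongDual ℝ X)) := by
  have : (annih Y : Set (StrongDual ℝ X)) = ⋂ y ∈ Y, {f | f y = 0} := by
    ext f
    simp [annih]
  rw [this]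
  exact isClosed_biInter fun y _ => isClosed_eq (continuous_id.clm_apply continuous_const)
    continuous_const

theorem mem_annih_annih_of_tendsto {ι : Type*} {l : Filter ι} [l.NeBot] {Z : Submodule ℝ X}
    {F : StrongDual ℝ (StrongDual ℝ X)} {x : ι → X} (hxZ : ∀ i, x i ∈ Z)
    (hx : ∀ f : StrongDual ℝ X, Tendsto (fun i => f (x i)) l (𝓝 (F f))) :
    F ∈ annih (annih Z) := by
  intro f hf
  have hzero : (fun i => f (x i)) = fun _ => 0 := funext fun i => hf (x i) (hxZ i)
  exact tendsto_nhds_unique (hzero ▸ hx f) tendsto_const_nhds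

theorem le_annih_of_denseRange {ι : Type*} {Y : Submodule ℝ X}
    {W : Submodule ℝ (StrongDual ℝ X)} {u : ι → W} (hu : DenseRange u)
    (h : ∀ i, (u i : StrongDual ℝ X) ∈ annih Y) : W ≤ annih Y := fun F hF =>
  hu.induction_on (p := fun G : W => (G : StrongDual ℝ X) ∈ annih Y) ⟨F, hF⟩
    ((isClosed_annih Y).preimage continuous_subtype_val) h

end Annihilator

theorem isSeparable_topologicalClosure_span {X : Type*} [SeminormedAddCommGroup X]
    [NormedSpace ℝ X] {s : Set X} (hs : s.Countable) :
    TopologicalSpace.IsSeparable ((Submodule.span ℝ s).topologicalClosure : Set X) := by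
  rw [Submodule.topologicalClosure_coe]
  exact hs.isSeparable.span.closure

theorem stmt1_general (X : Type*) [NormedAddCommGroup X] [NormedSpace ℝ X]
    (hX : WStarSeqDense X)
    (Z₀ : Submodule ℝ (StrongDual ℝ (StrongDual ℝ X)))
    (hZ₀s : TopologicalSpace.SeparableSpace ↥Z₀) :
    ∃ Z : Submodule ℝ X, IsClosed (Z : Set X) ∧ TopologicalSpace.SeparableSpace ↥Z ∧
      Z₀ ≤ annih (annih Z) := by
  obtain ⟨u, hu⟩ := TopologicalSpace.exists_dense_seq Z₀
  choose x hx using fun k => hX (u k)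
  set s : Set X := Set.range fun p : ℕ × ℕ => x p.1 p.2
  set Z : Submodule ℝ X := (Submodule.span ℝ s).topologicalClosure
  have hxZ : ∀ k n, x k n ∈ Z := fun k n =>
    Submodule.le_topologicalClosure _ (Submodule.subset_span ⟨(k, n), rfl⟩)
  refine ⟨Z, Submodule.isClosed_topologicalClosure _,
    (isSeparable_topologicalClosure_span (Set.countable_range _)).separableSpace, ?_⟩
  exact le_annih_of_denseRange hu fun k => mem_annih_annih_of_tendsto (hxZ k) (hx k)

theorem stmt1 (X : Type*) [NormedAddCommGroup X] [NormedSpace ℝ X] [CompleteSpace X]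
    (hX : WStarSeqDense X)
    (Z₀ : Submodule ℝ (StrongDual ℝ (StrongDual ℝ X))) (hZ₀c : IsClosed (Z₀ : Set (StrongDual ℝ (StrongDual ℝ X))))
    (hZ₀s : TopologicalSpace.SeparableSpace ↥Z₀) :
    ∃ Z : Submodule ℝ X, IsClosed (Z : Set X) ∧ TopologicalSpace.SeparableSpace ↥Z ∧
      Z₀ ≤ annih (annih Z) :=
  stmt1_general X hX Z₀ hZ₀s
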